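/- Let ≤ be a well-order on W and let Π be a ≤-compatible term-rewriting system on V = W →₀ k. The following are equivalent: (1) Π is confluent; (2) for every nonzero f ∈ I_Π, the ≤-maximum element of supp(f) is the left-hand side of some rule of Π (i.e., it does not lie in Irr(Π)); (3) V = k·Irr(Π) ⊕ I_Π and the residue classes {δ_w + I_Π : w ∈ Irr(Π)} form a k-basis of the quotient vector space V / I_Π. -/

import Mathlib

/-!
Rewriting stays in the coset `f + I_S` and, by compatibility, strictly lowers the support of `f`
colexicographically, so it terminates and every `f` has a reduct in `k·Irr(S)`. If
`k·Irr(S) ∩ I_S = 0`, two such reducts of `f` differ by an element of this intersection, which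
gives confluence; the condition on leading monomials forces the intersection to vanish.
Conversely, under confluence joinability is an equivalence relation, and it identifies
`f + c • (δ_t - v)` with `f` because both reduce, by the rule at `t`, to the same element; hence
every element of `I_S` rewrites to `0`. Rewrites never touch an irreducible leading monomial nor
anything above it, so an element rewriting to `0` has a reducible leading monomial. Finally, a
complement of `I_S` maps isomorphically onto `V / I_S`, which yields the basis.
-/

/-- One-step rewriting relation of a term-rewriting system `S ⊆ W × (W →₀ k)`. -/
def RewStep {k W : Type*} [Field k] (S : Set (W × (W →₀ k))) (f g : W →₀ k) : Prop :=
  ∃ t v, (t, v) ∈ S ∧ f t ≠ 0 ∧ g = f - Finsupp.single t (f t) + f t • v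

/-- A rewriting system is `≤`-compatible if every monomial in the support of a
right-hand side is strictly smaller than the left-hand side. -/
def RewCompatible {k W : Type*} [Field k] [LinearOrder W] (S : Set (W × (W →₀ k))) : Prop :=
  ∀ p ∈ S, ∀ w ∈ (p.2 : W →₀ k).support, w < p.1

/-- Confluence: any two rewritings of a common element are joinable. -/
def RewConfluent {k W : Type*} [Field k] (S : Set (W × (W →₀ k))) : Prop :=
  ∀ f g₁ g₂ : W →₀ k, Relation.ReflTransGen (RewStep S) f g₁ →
    Relation.ReflTransGen (RewStep S) f g₂ →
      ∃ h, Relation.ReflTransGen (RewStep S) g₁ h ∧ Relation.ReflTransGen (RewStep S) g₂ h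

/-- The linear span `I_S` of the elements `δ_t - v` for the rules `(t, v)` of `S`. -/
noncomputable def RewIdeal {k W : Type*} [Field k] (S : Set (W × (W →₀ k))) : Submodule k (W →₀ k) :=
  Submodule.span k {x : W →₀ k | ∃ p ∈ S, x = Finsupp.single p.1 (1 : k) - p.2}

/-- `Irr(S)`: the set of basis elements that are not the left-hand side of any rule. -/
def RewIrr {k W : Type*} [Field k] (S : Set (W × (W →₀ k))) : Set W :=
  {w | ∀ v, (w, v) ∉ S}

/-- `k·Irr(S)`: the linear span of the irreducible basis elements. -/
noncomputable def RewIrrSpan {k W : Type*} [Field k] (S : Set (W × (W →₀ k))) : Submodule k (W →₀ k) :=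
  Submodule.span k ((fun w => Finsupp.single w (1 : k)) '' RewIrr S)


open Relation Finsupp

def RewLeadingReducible {k W : Type*} [Field k] [LinearOrder W] (S : Set (W × (W →₀ k)))
    (f : W →₀ k) : Prop :=
  ∃ t ∈ f.support, (∀ w ∈ f.support, w ≤ t) ∧ ∃ v, (t, v) ∈ S

section Basis

variable {ι R M : Type*} [Ring R] [AddCommGroup M] [Module R M]

theorem exists_basis_quotient_of_isCompl {v : ι → M} (hv : LinearIndependent R v)
    {p : Submodule R M} (hp : IsCompl (Submodule.span R (Set.range v)) p) :
    ∃ b : Module.Basis ι R (M ⧸ p), ∀ i, b i = Submodule.Quotient.mk (v i) := by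
  have hli : LinearIndependent R (p.mkQ ∘ v) :=
    hv.map (by rw [Submodule.ker_mkQ]; exact hp.disjoint)
  have hspan : ⊤ ≤ Submodule.span R (Set.range (p.mkQ ∘ v)) := by
    rw [Set.range_comp, ← Submodule.map_span, top_le_iff, Submodule.map_mkQ_eq_top, sup_comm,
      hp.sup_eq_top]
  exact ⟨Module.Basis.mk hli hspan, fun i => Module.Basis.mk_apply hli hspan i⟩

end Basis

section Rewriting

variable {k W : Type*} [Field k] {S : Set (W × (W →₀ k))}

theorem RewStep.sub_mem_rewIdeal {f g : W →₀ k} (h : RewStep S f g) : f - g ∈ RewIdeal S := by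
  obtain ⟨t, v, hr, -, rfl⟩ := h
  have : f - (f - single t (f t) + f t • v) = f t • (single t 1 - v) := by
    rw [smul_sub, smul_single_one]; abel
  rw [this]
  exact Submodule.smul_mem _ _ (Submodule.subset_span ⟨(t, v), hr, rfl⟩)

theorem Relation.ReflTransGen.sub_mem_rewIdeal {f g : W →₀ k}
    (h : ReflTransGen (RewStep S) f g) : f - g ∈ RewIdeal S := by
  induction h with
  | refl => simp
  | tail _ hstep ih => simpa using (RewIdeal S).add_mem ih hstep.sub_mem_rewIdeal

theorem eq_zero_of_zero_reflTransGen {g : W →₀ k} (h : ReflTransGen (RewStep S) 0 g) :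
    g = 0 := by
  obtain h | ⟨_, ⟨_, _, _, h0, _⟩, _⟩ := h.cases_head
  · exact h.symm
  · exact absurd rfl h0

theorem reflTransGen_reduce {t : W} {v : W →₀ k} (hr : (t, v) ∈ S) (f : W →₀ k) :
    ReflTransGen (RewStep S) f (f - single t (f t) + f t • v) := by
  by_cases hft : f t = 0
  · simpa [hft] using ReflTransGen.refl
  · exact ReflTransGen.single ⟨t, v, hr, hft, rfl⟩

theorem mem_rewIrrSpan_iff {f : W →₀ k} : f ∈ RewIrrSpan S ↔ ↑f.support ⊆ RewIrr S := by
  rw [RewIrrSpan, ← supported_eq_span_single, mem_supported]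

theorem exists_basis_quotient_rewIdeal (hcompl : IsCompl (RewIrrSpan S) (RewIdeal S)) :
    ∃ b : Module.Basis (RewIrr S) k ((W →₀ k) ⧸ RewIdeal S),
      ∀ w : RewIrr S, b w = Submodule.Quotient.mk (single (w : W) (1 : k)) := by
  refine exists_basis_quotient_of_isCompl
    ((linearIndependent_single_one k W).comp _ Subtype.val_injective) ?_
  rwa [Set.range_comp, Subtype.range_coe]

variable [LinearOrder W]

theorem RewCompatible.apply_lhs_eq_zero (hS : RewCompatible S) {t : W} {v : W →₀ k}
    (hr : (t, v) ∈ S) {d : W} (hd : t ≤ d) : v d = 0 :=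
  notMem_support_iff.mp fun hv => (hS _ hr d hv).not_ge hd

theorem RewStep.exists_lhs (hS : RewCompatible S) {f g : W →₀ k} (h : RewStep S f g) :
    ∃ t, (∃ v, (t, v) ∈ S) ∧ f t ≠ 0 ∧ g t = 0 ∧ ∀ d, t < d → g d = f d := by
  obtain ⟨t, v, hr, hft, rfl⟩ := h
  refine ⟨t, ⟨v, hr⟩, hft, ?_, fun d hd => ?_⟩
  · simp [hS.apply_lhs_eq_zero hr le_rfl]
  · simp [hd.ne, hS.apply_lhs_eq_zero hr hd.le]

theorem RewCompatible.join_add_smul_rule (hS : RewCompatible S) {t : W} {v : W →₀ k}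
    (hr : (t, v) ∈ S) (c : k) (f : W →₀ k) :
    Join (ReflTransGen (RewStep S)) (f + c • (single t 1 - v)) f := by
  refine ⟨_, ?_, reflTransGen_reduce hr f⟩
  convert reflTransGen_reduce hr (f + c • (single t 1 - v)) using 1
  have hx : (f + c • (single t 1 - v) : W →₀ k) t = f t + c := by
    simp [hS.apply_lhs_eq_zero hr le_rfl]
  rw [hx, single_add, add_smul, ← smul_single_one t c]
  module

theorem RewCompatible.wellFounded_swap_rewStep [WellFoundedLT W] (hS : RewCompatible S) :
    WellFounded (Function.swap (RewStep S)) := by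
  classical
  let supportIndicator (f : W →₀ k) : Colex (W →₀ ℕ) :=
    toColex (f.mapRange (fun c => if c = 0 then 0 else 1) (by simp))
  refine Subrelation.wf (fun {g f} h => ?_) (InvImage.wf supportIndicator wellFounded_lt)
  obtain ⟨t, -, hft, hgt, habove⟩ := h.exists_lhs hS
  exact Colex.lt_iff.mpr ⟨t, fun d hd => by simp [supportIndicator, habove d hd],
    by simp [supportIndicator, hft, hgt]⟩

theorem RewCompatible.exists_reflTransGen_mem_rewIrrSpan [WellFoundedLT W]
    (hS : RewCompatible S) (f : W →₀ k) :
    ∃ g ∈ RewIrrSpan S, ReflTransGen (RewStep S) f g := by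
  obtain ⟨g, hfg, hmin⟩ :=
    hS.wellFounded_swap_rewStep.has_min {g | ReflTransGen (RewStep S) f g} ⟨f, .refl⟩
  refine ⟨g, mem_rewIrrSpan_iff.mpr fun t ht v hr => ?_, hfg⟩
  have hstep : RewStep S g _ := ⟨t, v, hr, mem_support_iff.mp ht, rfl⟩
  exact hmin _ (hfg.tail hstep) hstep

theorem RewCompatible.rewIrrSpan_sup_rewIdeal [WellFoundedLT W] (hS : RewCompatible S) :
    RewIrrSpan S ⊔ RewIdeal S = ⊤ := by
  refine eq_top_iff.mpr fun f _ => ?_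
  obtain ⟨g, hg, hfg⟩ := hS.exists_reflTransGen_mem_rewIrrSpan f
  exact Submodule.mem_sup.mpr ⟨g, hg, f - g, hfg.sub_mem_rewIdeal, add_sub_cancel g f⟩

theorem RewCompatible.apply_eq_of_reflTransGen (hS : RewCompatible S) {t : W} (ht : t ∈ RewIrr S)
    {f g : W →₀ k} (hf : ∀ d, t < d → f d = 0) (h : ReflTransGen (RewStep S) f g) :
    ∀ d, t ≤ d → g d = f d := by
  induction h with
  | refl => exact fun _ _ => rfl
  | tail _ hstep ih =>
    obtain ⟨t', ⟨v', hr⟩, hgt', -, habove⟩ := hstep.exists_lhs hS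
    have ht' : t' < t := by
      refine lt_of_le_of_ne (not_lt.mp fun hlt => hgt' ?_) fun h => ht v' (h ▸ hr)
      rw [ih t' hlt.le, hf t' hlt]
    exact fun d hd => (habove d (ht'.trans_le hd)).trans (ih d hd)

theorem RewCompatible.leadingReducible_of_reflTransGen_zero (hS : RewCompatible S)
    {f : W →₀ k} (hf : f ≠ 0) (h : ReflTransGen (RewStep S) f 0) :
    RewLeadingReducible S f := by
  have hne : f.support.Nonempty := support_nonempty_iff.mpr hf
  set t := f.support.max' hne
  refine ⟨t, f.support.max'_mem hne, fun w hw => f.support.le_max' w hw, ?_⟩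
  by_contra hirr
  have hvanish : ∀ d, t < d → f d = 0 := fun d hd =>
    notMem_support_iff.mp fun hd' => (f.support.le_max' d hd').not_gt hd
  have := hS.apply_eq_of_reflTransGen (not_exists.mp hirr) hvanish h t le_rfl
  exact mem_support_iff.mp (f.support.max'_mem hne) this.symm

theorem RewCompatible.reflTransGen_zero_of_mem_rewIdeal (hS : RewCompatible S)
    (hconf : RewConfluent S) {x : W →₀ k} (hx : x ∈ RewIdeal S) :
    ReflTransGen (RewStep S) x 0 := by
  have hequiv : Equivalence (Join (ReflTransGen (RewStep S))) := equivalence_join hconf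
  have hjoin : ∀ (c : k) (f : W →₀ k), Join (ReflTransGen (RewStep S)) (f + c • x) f := by
    induction hx using Submodule.span_induction with
    | mem y hy =>
      obtain ⟨⟨t, v⟩, hr, rfl⟩ := hy
      exact hS.join_add_smul_rule hr
    | zero => simpa using fun f => hequiv.refl f
    | add y z _ _ hy hz =>
      intro c f
      rw [smul_add, ← add_assoc]
      exact hequiv.trans (hz c _) (hy c f)
    | smul a y _ hy => simpa [smul_smul] using fun c => hy (c * a)
  obtain ⟨g, hxg, h0g⟩ := by simpa using hjoin 1 0
  exact eq_zero_of_zero_reflTransGen h0g ▸ hxg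

theorem RewCompatible.leadingReducible_of_confluent (hS : RewCompatible S)
    (hconf : RewConfluent S) {f : W →₀ k} (hf : f ∈ RewIdeal S) (hne : f ≠ 0) :
    RewLeadingReducible S f :=
  hS.leadingReducible_of_reflTransGen_zero hne (hS.reflTransGen_zero_of_mem_rewIdeal hconf hf)

theorem disjoint_rewIrrSpan_rewIdeal
    (hlead : ∀ f ∈ RewIdeal S, f ≠ 0 → RewLeadingReducible S f) :
    Disjoint (RewIrrSpan S) (RewIdeal S) := by
  refine Submodule.disjoint_def.mpr fun f hirr hf => by_contra fun hne => ?_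
  obtain ⟨t, ht, -, v, hr⟩ := hlead f hf hne
  exact mem_rewIrrSpan_iff.mp hirr ht v hr

theorem RewCompatible.rewConfluent_of_disjoint [WellFoundedLT W] (hS : RewCompatible S)
    (hdisj : Disjoint (RewIrrSpan S) (RewIdeal S)) : RewConfluent S := by
  intro f g₁ g₂ hfg₁ hfg₂
  obtain ⟨h₁, hirr₁, hgh₁⟩ := hS.exists_reflTransGen_mem_rewIrrSpan g₁
  obtain ⟨h₂, hirr₂, hgh₂⟩ := hS.exists_reflTransGen_mem_rewIrrSpan g₂
  have hmem : h₁ - h₂ ∈ RewIdeal S := by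
    simpa using (RewIdeal S).sub_mem (hfg₂.trans hgh₂).sub_mem_rewIdeal
      (hfg₁.trans hgh₁).sub_mem_rewIdeal
  have : h₁ = h₂ :=
    sub_eq_zero.mp (Submodule.disjoint_def.mp hdisj _ ((RewIrrSpan S).sub_mem hirr₁ hirr₂) hmem)
  exact ⟨h₁, hgh₁, this ▸ hgh₂⟩

end Rewriting

/-- Composition--Diamond-style equivalence: for a `≤`-compatible rewriting system over
a well-ordered set, the following are equivalent: (1) the system is confluent;
(2) the leading (maximum) monomial of every nonzero element of `I_S` is the
left-hand side of some rule; (3) `V = k·Irr(S) ⊕ I_S` and the residue classes of the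
irreducible monomials form a `k`-basis of `V / I_S`. -/
theorem confluent_iff_leading_iff_basis {k W : Type*} [Field k] [LinearOrder W]
    [WellFoundedLT W] (S : Set (W × (W →₀ k))) (hS : RewCompatible S) :
    (RewConfluent S ↔
      ∀ f ∈ RewIdeal S, f ≠ 0 →
        ∃ t ∈ f.support, (∀ w ∈ f.support, w ≤ t) ∧ ∃ v, (t, v) ∈ S) ∧
    (RewConfluent S ↔
      ((RewIrrSpan S ⊔ RewIdeal S = ⊤ ∧ RewIrrSpan S ⊓ RewIdeal S = ⊥) ∧
        ∃ b : Module.Basis (RewIrr S) k ((W →₀ k) ⧸ RewIdeal S),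
          ∀ w : RewIrr S,
            b w = Submodule.Quotient.mk (Finsupp.single (w : W) (1 : k)))) := by
  have hcompl (hconf : RewConfluent S) : IsCompl (RewIrrSpan S) (RewIdeal S) :=
    ⟨disjoint_rewIrrSpan_rewIdeal fun _ => hS.leadingReducible_of_confluent hconf,
      codisjoint_iff.mpr hS.rewIrrSpan_sup_rewIdeal⟩
  refine ⟨⟨fun hconf _ => hS.leadingReducible_of_confluent hconf,
    fun hlead => hS.rewConfluent_of_disjoint (disjoint_rewIrrSpan_rewIdeal hlead)⟩,
    fun hconf => ?_, ?_⟩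
  · exact ⟨⟨hS.rewIrrSpan_sup_rewIdeal, disjoint_iff.mp (hcompl hconf).disjoint⟩,
      exists_basis_quotient_rewIdeal (hcompl hconf)⟩
  · rintro ⟨⟨-, hinf⟩, -⟩
    exact hS.rewConfluent_of_disjoint (disjoint_iff.mpr hinf)
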